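/- Let Ω ⊆ ℝ² be open and convex, and let q : Ω → ℝ be smooth with q ≠ 0, q_yy ≠ 0, q_xy ≠ 0, and q_x q_yy − q_y q_xy ≠ 0 at every point of Ω. Suppose q satisfies the degenerate Monge–Ampère equation q_xx q_yy = (q_xy)² on Ω together with the third-order relation q · q_xy · q_yyy + q_y · q_xy · q_yy = q · q_yy · q_xyy + q_x · (q_yy)² on Ω. Then there exist constants x₀, y₀ ∈ ℝ such that (x − x₀) q_x + (y − y₀) q_y = q on Ω; that is, q is homogeneous of degree 1 after translating the coordinates by (x₀, y₀). -/

import Mathlib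

open Real Set

/-- Partial derivative in the first variable. -/
noncomputable def px (f : ℝ × ℝ → ℝ) : ℝ × ℝ → ℝ :=
  fun p => deriv (fun t => f (t, p.2)) p.1

/-- Partial derivative in the second variable. -/
noncomputable def py (f : ℝ × ℝ → ℝ) : ℝ × ℝ → ℝ :=
  fun p => deriv (fun t => f (p.1, t)) p.2

/-!
Let `D = q_x q_yy - q_y q_xy` and `V = (q / D) (q_yy, -q_xy)`, so that `V · ∇q = q` and
`V · ∇q_y = 0`; by the Monge–Ampère equation also `V · ∇q_x = 0`. The third-order relation says
exactly that `V · ∇q_yy = -q_yy`, and together with the `y`-derivative of the Monge–Ampère equation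
it gives `V · ∇q_xy = -q_xy`. Differentiating `V · ∇q = q` and `V · ∇q_y = 0` therefore yields,
for each column of the Jacobian of `V`, a linear system with determinant `D` whose only solution
is the corresponding column of the identity. Hence `p - V p` is constant on the connected set `Ω`,
and this constant is `(x₀, y₀)`.
-/

open Filter Topology

section PartialDerivatives

variable {E : Type*} [NormedAddCommGroup E] [NormedSpace ℝ E]
  {f : ℝ × ℝ → E} {g h : ℝ × ℝ → ℝ} {p : ℝ × ℝ} {a b : ℝ}

theorem hasDerivAt_fst_slice (hf : DifferentiableAt ℝ f p) :
    HasDerivAt (fun t => f (t, p.2)) (fderiv ℝ f p (1, 0)) p.1 :=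
  hf.hasFDerivAt.comp_hasDerivAt p.1 ((hasDerivAt_id' p.1).prodMk (hasDerivAt_const p.1 p.2))

theorem hasDerivAt_snd_slice (hf : DifferentiableAt ℝ f p) :
    HasDerivAt (fun t => f (p.1, t)) (fderiv ℝ f p (0, 1)) p.2 :=
  hf.hasFDerivAt.comp_hasDerivAt p.2 ((hasDerivAt_const p.2 p.1).prodMk (hasDerivAt_id' p.2))

theorem px_eq_fderiv (hg : DifferentiableAt ℝ g p) : px g p = fderiv ℝ g p (1, 0) :=
  (hasDerivAt_fst_slice hg).deriv

theorem py_eq_fderiv (hg : DifferentiableAt ℝ g p) : py g p = fderiv ℝ g p (0, 1) :=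
  (hasDerivAt_snd_slice hg).deriv

theorem hasDerivAt_px (hg : DifferentiableAt ℝ g p) :
    HasDerivAt (fun t => g (t, p.2)) (px g p) p.1 :=
  px_eq_fderiv hg ▸ hasDerivAt_fst_slice hg

theorem hasDerivAt_py (hg : DifferentiableAt ℝ g p) :
    HasDerivAt (fun t => g (p.1, t)) (py g p) p.2 :=
  py_eq_fderiv hg ▸ hasDerivAt_snd_slice hg

theorem fderiv_eq_of_px_eq_of_py_eq (hg : DifferentiableAt ℝ g p) (hh : DifferentiableAt ℝ h p)
    (hx : px g p = px h p) (hy : py g p = py h p) : fderiv ℝ g p = fderiv ℝ h p := by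
  rw [px_eq_fderiv hg, px_eq_fderiv hh] at hx
  rw [py_eq_fderiv hg, py_eq_fderiv hh] at hy
  exact ContinuousLinearMap.prod_ext (ContinuousLinearMap.ext_ring hx)
    (ContinuousLinearMap.ext_ring hy)

theorem ContDiffOn.px {Ω : Set (ℝ × ℝ)} {m n : WithTop ℕ∞} (hg : ContDiffOn ℝ n g Ω)
    (hΩ : IsOpen Ω) (hmn : m + 1 ≤ n) : ContDiffOn ℝ m (px g) Ω := by
  have hn : n ≠ 0 := (zero_lt_one.trans_le (le_add_self.trans hmn)).ne'
  exact ((hg.fderiv_of_isOpen hΩ hmn).clm_apply contDiffOn_const).congr fun _ hz =>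
    px_eq_fderiv ((hg.differentiableOn hn).differentiableAt (hΩ.mem_nhds hz))

theorem ContDiffOn.py {Ω : Set (ℝ × ℝ)} {m n : WithTop ℕ∞} (hg : ContDiffOn ℝ n g Ω)
    (hΩ : IsOpen Ω) (hmn : m + 1 ≤ n) : ContDiffOn ℝ m (py g) Ω := by
  have hn : n ≠ 0 := (zero_lt_one.trans_le (le_add_self.trans hmn)).ne'
  exact ((hg.fderiv_of_isOpen hΩ hmn).clm_apply contDiffOn_const).congr fun _ hz =>
    py_eq_fderiv ((hg.differentiableOn hn).differentiableAt (hΩ.mem_nhds hz))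

theorem Filter.EventuallyEq.fst_slice (hgh : g =ᶠ[𝓝 p] h) :
    (fun t => g (t, p.2)) =ᶠ[𝓝 p.1] fun t => h (t, p.2) :=
  hgh.comp_tendsto ((continuous_id.prodMk continuous_const).tendsto' p.1 p rfl)

theorem Filter.EventuallyEq.snd_slice (hgh : g =ᶠ[𝓝 p] h) :
    (fun t => g (p.1, t)) =ᶠ[𝓝 p.2] fun t => h (p.1, t) :=
  hgh.comp_tendsto ((continuous_const.prodMk continuous_id).tendsto' p.2 p rfl)

theorem Filter.EventuallyEq.px_eq (hgh : g =ᶠ[𝓝 p] h) : px g p = px h p :=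
  hgh.fst_slice.deriv_eq

theorem Filter.EventuallyEq.py_eq (hgh : g =ᶠ[𝓝 p] h) : py g p = py h p :=
  hgh.snd_slice.deriv_eq

theorem Filter.EventuallyEq.eq_of_hasDerivAt_fst_slice (hgh : g =ᶠ[𝓝 p] h)
    (hg : HasDerivAt (fun t => g (t, p.2)) a p.1) (hh : HasDerivAt (fun t => h (t, p.2)) b p.1) :
    a = b :=
  hg.unique (hh.congr_of_eventuallyEq hgh.fst_slice)

theorem Filter.EventuallyEq.eq_of_hasDerivAt_snd_slice (hgh : g =ᶠ[𝓝 p] h)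
    (hg : HasDerivAt (fun t => g (p.1, t)) a p.2) (hh : HasDerivAt (fun t => h (p.1, t)) b p.2) :
    a = b :=
  hg.unique (hh.congr_of_eventuallyEq hgh.snd_slice)

theorem px_py_comm (hg : ContDiffAt ℝ 2 g p) : px (py g) p = py (px g) p := by
  have hdiff : ∀ᶠ z in 𝓝 p, DifferentiableAt ℝ g z :=
    (hg.eventually (by simp)).mono fun z hz => hz.differentiableAt (by simp)
  have hF : DifferentiableAt ℝ (fderiv ℝ g) p :=
    (hg.fderiv_right (m := 1) le_rfl).differentiableAt one_ne_zero
  have hpy : py g =ᶠ[𝓝 p] fun z => fderiv ℝ g z (0, 1) := hdiff.mono fun _ => py_eq_fderiv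
  have hpx : px g =ᶠ[𝓝 p] fun z => fderiv ℝ g z (1, 0) := hdiff.mono fun _ => px_eq_fderiv
  calc px (py g) p = px (fun z => fderiv ℝ g z (0, 1)) p := hpy.px_eq
    _ = fderiv ℝ (fderiv ℝ g) p (1, 0) (0, 1) :=
      ((ContinuousLinearMap.apply ℝ ℝ ((0 : ℝ), (1 : ℝ))).hasFDerivAt.comp_hasDerivAt p.1
        (hasDerivAt_fst_slice hF)).deriv
    _ = fderiv ℝ (fderiv ℝ g) p (0, 1) (1, 0) := hg.isSymmSndFDerivAt (by simp) _ _
    _ = py (fun z => fderiv ℝ g z (1, 0)) p :=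
      ((ContinuousLinearMap.apply ℝ ℝ ((1 : ℝ), (0 : ℝ))).hasFDerivAt.comp_hasDerivAt p.2
        (hasDerivAt_snd_slice hF)).deriv.symm
    _ = py (px g) p := hpx.py_eq.symm

end PartialDerivatives

section PartialDerivativesOnOpen

variable {g h : ℝ × ℝ → ℝ} {p : ℝ × ℝ} {Ω : Set (ℝ × ℝ)}

@[simp] theorem px_fst : px Prod.fst p = 1 := congrFun deriv_id'' _

@[simp] theorem py_fst : py Prod.fst p = 0 := deriv_const _ _

@[simp] theorem px_snd : px Prod.snd p = 0 := deriv_const _ _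

@[simp] theorem py_snd : py Prod.snd p = 1 := congrFun deriv_id'' _

theorem IsOpen.exists_eq_add_of_px_eq_of_py_eq (hΩ : IsOpen Ω) (hΩ' : IsPreconnected Ω)
    (hg : DifferentiableOn ℝ g Ω) (hh : DifferentiableOn ℝ h Ω) (hx : EqOn (px g) (px h) Ω)
    (hy : EqOn (py g) (py h) Ω) : ∃ a, EqOn g (h · + a) Ω :=
  hΩ.exists_eq_add_of_fderiv_eq hΩ' hg hh fun _ hz =>
    fderiv_eq_of_px_eq_of_py_eq (hg.differentiableAt (hΩ.mem_nhds hz))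
      (hh.differentiableAt (hΩ.mem_nhds hz)) (hx hz) (hy hz)

end PartialDerivativesOnOpen

theorem eq_and_eq_of_det_ne_zero {K : Type*} [Field K] {a b c d u v u' v' : K}
    (hdet : a * d - b * c ≠ 0) (h₁ : u * a + v * b = u' * a + v' * b)
    (h₂ : u * c + v * d = u' * c + v' * d) : u = u' ∧ v = v' :=
  ⟨mul_right_cancel₀ hdet (by linear_combination d * h₁ - b * h₂),
    mul_right_cancel₀ hdet (by linear_combination a * h₂ - c * h₁)⟩

/-- The field `V` of the proof sketch: Cramer's solution of `X q_x + Y q_y = q`,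
`X q_xy + Y q_yy = 0`. -/
noncomputable def radialX (q : ℝ × ℝ → ℝ) : ℝ × ℝ → ℝ :=
  fun p => q p * py (py q) p / (px q p * py (py q) p - py q p * py (px q) p)

noncomputable def radialY (q : ℝ × ℝ → ℝ) : ℝ × ℝ → ℝ :=
  fun p => -(q p * py (px q) p) / (px q p * py (py q) p - py q p * py (px q) p)

section RadialField

variable {q : ℝ × ℝ → ℝ} {p : ℝ × ℝ} {Ω : Set (ℝ × ℝ)}

theorem radial_dot_grad (hD : px q p * py (py q) p - py q p * py (px q) p ≠ 0) :
    radialX q p * px q p + radialY q p * py q p = q p := by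
  rw [radialX, radialY, div_mul_eq_mul_div, div_mul_eq_mul_div, ← add_div, div_eq_iff hD]
  ring

theorem radial_dot_grad_py (hD : px q p * py (py q) p - py q p * py (px q) p ≠ 0) :
    radialX q p * py (px q) p + radialY q p * py (py q) p = 0 := by
  rw [radialX, radialY, div_mul_eq_mul_div, div_mul_eq_mul_div, ← add_div, div_eq_iff hD]
  ring

theorem radial_dot_grad_px (hD : px q p * py (py q) p - py q p * py (px q) p ≠ 0)
    (hMA : px (px q) p * py (py q) p = py (px q) p ^ 2) :
    radialX q p * px (px q) p + radialY q p * py (px q) p = 0 := by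
  rw [radialX, radialY, div_mul_eq_mul_div, div_mul_eq_mul_div, ← add_div, div_eq_iff hD]
  linear_combination q p * hMA

theorem radial_dot_grad_pyy (hD : px q p * py (py q) p - py q p * py (px q) p ≠ 0)
    (hthird : q p * py (px q) p * py (py (py q)) p + py q p * py (px q) p * py (py q) p =
      q p * py (py q) p * py (py (px q)) p + px q p * (py (py q) p) ^ 2) :
    radialX q p * py (py (px q)) p + radialY q p * py (py (py q)) p = -py (py q) p := by
  rw [radialX, radialY, div_mul_eq_mul_div, div_mul_eq_mul_div, ← add_div, div_eq_iff hD]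
  linear_combination -hthird

theorem radial_dot_grad_pxy (hD : px q p * py (py q) p - py q p * py (px q) p ≠ 0)
    (hqyy : py (py q) p ≠ 0) (hMA : px (px q) p * py (py q) p = py (px q) p ^ 2)
    (hMAy : py (px (px q)) p * py (py q) p + px (px q) p * py (py (py q)) p =
      2 * py (px q) p * py (py (px q)) p)
    (hthird : q p * py (px q) p * py (py (py q)) p + py q p * py (px q) p * py (py q) p =
      q p * py (py q) p * py (py (px q)) p + px q p * (py (py q) p) ^ 2) :
    radialX q p * py (px (px q)) p + radialY q p * py (py (px q)) p = -py (px q) p :=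
  mul_left_cancel₀ hqyy <| by
    linear_combination radialX q p * hMAy - py (py (py q)) p * radial_dot_grad_px hD hMA +
      py (py (px q)) p * radial_dot_grad_py hD + py (px q) p * radial_dot_grad_pyy hD hthird

theorem contDiffOn_radialX {m : WithTop ℕ∞} (hq : ContDiffOn ℝ (m + 2) q Ω) (hΩ : IsOpen Ω)
    (hD : ∀ p ∈ Ω, px q p * py (py q) p - py q p * py (px q) p ≠ 0) :
    ContDiffOn ℝ m (radialX q) Ω := by
  have h1 : m + 1 + 1 ≤ m + 2 := by rw [add_assoc, one_add_one_eq_two]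
  have hqx := hq.px hΩ h1
  have hqy := hq.py hΩ h1
  exact ((hq.of_le (le_add_right le_rfl)).mul ((hqy.py hΩ le_rfl))).div
    ((hqx.of_le (le_add_right le_rfl)).mul (hqy.py hΩ le_rfl) |>.sub
      ((hqy.of_le (le_add_right le_rfl)).mul (hqx.py hΩ le_rfl))) hD

theorem contDiffOn_radialY {m : WithTop ℕ∞} (hq : ContDiffOn ℝ (m + 2) q Ω) (hΩ : IsOpen Ω)
    (hD : ∀ p ∈ Ω, px q p * py (py q) p - py q p * py (px q) p ≠ 0) :
    ContDiffOn ℝ m (radialY q) Ω := by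
  have h1 : m + 1 + 1 ≤ m + 2 := by rw [add_assoc, one_add_one_eq_two]
  have hqx := hq.px hΩ h1
  have hqy := hq.py hΩ h1
  exact ((hq.of_le (le_add_right le_rfl)).mul ((hqx.py hΩ le_rfl))).neg.div
    ((hqx.of_le (le_add_right le_rfl)).mul (hqy.py hΩ le_rfl) |>.sub
      ((hqy.of_le (le_add_right le_rfl)).mul (hqx.py hΩ le_rfl))) hD

theorem py_radialX_eq_zero_and_py_radialY_eq_one (hΩ : IsOpen Ω) (hq : ContDiffOn ℝ 3 q Ω)
    (hD : ∀ p ∈ Ω, px q p * py (py q) p - py q p * py (px q) p ≠ 0) (hp : p ∈ Ω)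
    (hthird : q p * py (px q) p * py (py (py q)) p + py q p * py (px q) p * py (py q) p =
      q p * py (py q) p * py (py (px q)) p + px q p * (py (py q) p) ^ 2) :
    py (radialX q) p = 0 ∧ py (radialY q) p = 1 := by
  have hΩp := hΩ.mem_nhds hp
  have d : ∀ {g}, ContDiffOn ℝ 1 g Ω → HasDerivAt (fun t => g (p.1, t)) (py g p) p.2 :=
    fun hg => hasDerivAt_py ((hg.differentiableOn one_ne_zero).differentiableAt hΩp)
  have hqx : ContDiffOn ℝ 2 (px q) Ω := hq.px hΩ le_rfl
  have hqy : ContDiffOn ℝ 2 (py q) Ω := hq.py hΩ le_rfl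
  have euler : (fun z => radialX q z * px q z + radialY q z * py q z) =ᶠ[𝓝 p] q :=
    eventually_of_mem hΩp fun z hz => radial_dot_grad (hD z hz)
  have kernel : (fun z => radialX q z * py (px q) z + radialY q z * py (py q) z) =ᶠ[𝓝 p]
      fun _ => 0 :=
    eventually_of_mem hΩp fun z hz => radial_dot_grad_py (hD z hz)
  have hX := d (contDiffOn_radialX (m := 1) (hq.of_le (by norm_num)) hΩ hD)
  have hY := d (contDiffOn_radialY (m := 1) (hq.of_le (by norm_num)) hΩ hD)
  have h₁ := euler.eq_of_hasDerivAt_snd_slice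
    ((hX.mul (d (hqx.of_le (by norm_num)))).add (hY.mul (d (hqy.of_le (by norm_num)))))
    (d (hq.of_le (by norm_num)))
  have h₂ := kernel.eq_of_hasDerivAt_snd_slice
    ((hX.mul (d (hqx.py hΩ le_rfl))).add (hY.mul (d (hqy.py hΩ le_rfl)))) (hasDerivAt_const _ _)
  refine eq_and_eq_of_det_ne_zero (hD p hp) ?_ ?_
  · linear_combination h₁ - radial_dot_grad_py (hD p hp)
  · linear_combination h₂ - radial_dot_grad_pyy (hD p hp) hthird

theorem px_radialX_eq_one_and_px_radialY_eq_zero (hΩ : IsOpen Ω) (hq : ContDiffOn ℝ 3 q Ω)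
    (hD : ∀ p ∈ Ω, px q p * py (py q) p - py q p * py (px q) p ≠ 0)
    (hMA : ∀ p ∈ Ω, px (px q) p * py (py q) p = py (px q) p ^ 2) (hp : p ∈ Ω)
    (hqyy : py (py q) p ≠ 0)
    (hthird : q p * py (px q) p * py (py (py q)) p + py q p * py (px q) p * py (py q) p =
      q p * py (py q) p * py (py (px q)) p + px q p * (py (py q) p) ^ 2) :
    px (radialX q) p = 1 ∧ px (radialY q) p = 0 := by
  have hΩp := hΩ.mem_nhds hp
  have dx : ∀ {g}, ContDiffOn ℝ 1 g Ω → HasDerivAt (fun t => g (t, p.2)) (px g p) p.1 :=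
    fun hg => hasDerivAt_px ((hg.differentiableOn one_ne_zero).differentiableAt hΩp)
  have dy : ∀ {g}, ContDiffOn ℝ 1 g Ω → HasDerivAt (fun t => g (p.1, t)) (py g p) p.2 :=
    fun hg => hasDerivAt_py ((hg.differentiableOn one_ne_zero).differentiableAt hΩp)
  have comm : ∀ {g}, ContDiffOn ℝ 2 g Ω → ∀ z ∈ Ω, px (py g) z = py (px g) z :=
    fun hg z hz => px_py_comm (hg.contDiffAt (hΩ.mem_nhds hz))
  have hqx : ContDiffOn ℝ 2 (px q) Ω := hq.px hΩ le_rfl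
  have hqy : ContDiffOn ℝ 2 (py q) Ω := hq.py hΩ le_rfl
  have hX := dx (contDiffOn_radialX (m := 1) (hq.of_le (by norm_num)) hΩ hD)
  have hY := dx (contDiffOn_radialY (m := 1) (hq.of_le (by norm_num)) hΩ hD)
  have euler : (fun z => radialX q z * px q z + radialY q z * py q z) =ᶠ[𝓝 p] q :=
    eventually_of_mem hΩp fun z hz => radial_dot_grad (hD z hz)
  have kernel : (fun z => radialX q z * py (px q) z + radialY q z * py (py q) z) =ᶠ[𝓝 p]
      fun _ => 0 :=
    eventually_of_mem hΩp fun z hz => radial_dot_grad_py (hD z hz)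
  have mongeAmpere : (fun z => px (px q) z * py (py q) z) =ᶠ[𝓝 p] fun z => py (px q) z ^ 2 :=
    eventually_of_mem hΩp hMA
  have hsymm : px (py q) =ᶠ[𝓝 p] py (px q) :=
    eventually_of_mem hΩp (comm (hq.of_le (by norm_num)))
  have hMAy := mongeAmpere.eq_of_hasDerivAt_snd_slice
    ((dy (hqx.px hΩ le_rfl)).mul (dy (hqy.py hΩ le_rfl))) ((dy (hqx.py hΩ le_rfl)).pow 2)
  have h₁ := euler.eq_of_hasDerivAt_fst_slice
    ((hX.mul (dx (hqx.of_le (by norm_num)))).add (hY.mul (dx (hqy.of_le (by norm_num)))))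
    (dx (hq.of_le (by norm_num)))
  have h₂ := kernel.eq_of_hasDerivAt_fst_slice
    ((hX.mul (dx (hqx.py hΩ le_rfl))).add (hY.mul (dx (hqy.py hΩ le_rfl)))) (hasDerivAt_const _ _)
  rw [hsymm.self_of_nhds] at h₁
  rw [comm hqx p hp, (comm hqy p hp).trans hsymm.py_eq] at h₂
  refine eq_and_eq_of_det_ne_zero (hD p hp) ?_ ?_
  · linear_combination h₁ - radial_dot_grad_px (hD p hp) (hMA p hp)
  · linear_combination h₂ -
      radial_dot_grad_pxy (hD p hp) hqyy (hMA p hp) (by linear_combination hMAy) hthird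

end RadialField

theorem third_order_relation_implies_homogeneous_general
    (Ω : Set (ℝ × ℝ)) (hΩ : IsOpen Ω) (hconv : Convex ℝ Ω)
    (q : ℝ × ℝ → ℝ) (hq : ContDiffOn ℝ (⊤ : ℕ∞) q Ω)
    (hqyy : ∀ p ∈ Ω, py (py q) p ≠ 0)
    (hdenom : ∀ p ∈ Ω, px q p * py (py q) p - py q p * py (px q) p ≠ 0)
    (hMA : ∀ p ∈ Ω, px (px q) p * py (py q) p = (py (px q) p) ^ 2)
    (hthird : ∀ p ∈ Ω,
      q p * py (px q) p * py (py (py q)) p + py q p * py (px q) p * py (py q) p =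
        q p * py (py q) p * py (py (px q)) p + px q p * (py (py q) p) ^ 2) :
    ∃ x₀ y₀ : ℝ, ∀ p ∈ Ω,
      (p.1 - x₀) * px q p + (p.2 - y₀) * py q p = q p := by
  have hq3 : ContDiffOn ℝ 3 q Ω := hq.of_le (WithTop.coe_le_coe.mpr le_top)
  have hX := contDiffOn_radialX (m := 1) (hq3.of_le (by norm_num)) hΩ hdenom
  have hY := contDiffOn_radialY (m := 1) (hq3.of_le (by norm_num)) hΩ hdenom
  have hpx z (hz : z ∈ Ω) := px_radialX_eq_one_and_px_radialY_eq_zero hΩ hq3 hdenom hMA hz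
    (hqyy z hz) (hthird z hz)
  have hpy z (hz : z ∈ Ω) := py_radialX_eq_zero_and_py_radialY_eq_one hΩ hq3 hdenom hz
    (hthird z hz)
  obtain ⟨a, ha⟩ := hΩ.exists_eq_add_of_px_eq_of_py_eq hconv.isPreconnected
    (hX.differentiableOn one_ne_zero) differentiableOn_fst
    (fun z hz => (hpx z hz).1.trans px_fst.symm) (fun z hz => (hpy z hz).1.trans py_fst.symm)
  obtain ⟨b, hb⟩ := hΩ.exists_eq_add_of_px_eq_of_py_eq hconv.isPreconnected
    (hY.differentiableOn one_ne_zero) differentiableOn_snd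
    (fun z hz => (hpx z hz).2.trans px_snd.symm) (fun z hz => (hpy z hz).2.trans py_snd.symm)
  refine ⟨-a, -b, fun p hp => ?_⟩
  have euler := radial_dot_grad (hdenom p hp)
  rw [ha hp, hb hp] at euler
  linear_combination euler

/-- a solution of the degenerate Monge–Ampère equation satisfying the
third-order relation `q q_xy q_yyy + q_y q_xy q_yy = q q_yy q_xyy + q_x q_yy²` is
homogeneous of degree 1 after a translation. -/
theorem third_order_relation_implies_homogeneous
    (Ω : Set (ℝ × ℝ)) (hΩ : IsOpen Ω) (hconv : Convex ℝ Ω)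
    (q : ℝ × ℝ → ℝ) (hq : ContDiffOn ℝ (⊤ : ℕ∞) q Ω)
    (hq0 : ∀ p ∈ Ω, q p ≠ 0)
    (hqyy : ∀ p ∈ Ω, py (py q) p ≠ 0)
    (hqxy : ∀ p ∈ Ω, py (px q) p ≠ 0)
    (hdenom : ∀ p ∈ Ω, px q p * py (py q) p - py q p * py (px q) p ≠ 0)
    (hMA : ∀ p ∈ Ω, px (px q) p * py (py q) p = (py (px q) p) ^ 2)
    (hthird : ∀ p ∈ Ω,
      q p * py (px q) p * py (py (py q)) p + py q p * py (px q) p * py (py q) p =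
        q p * py (py q) p * py (py (px q)) p + px q p * (py (py q) p) ^ 2) :
    ∃ x₀ y₀ : ℝ, ∀ p ∈ Ω,
      (p.1 - x₀) * px q p + (p.2 - y₀) * py q p = q p :=
  third_order_relation_implies_homogeneous_general Ω hΩ hconv q hq hqyy hdenom hMA hthird
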